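/- Let C₂ > 0 and A ≥ 1 satisfy 27·A^{2/3} + C₂·A^{2/3} ≤ A. Suppose Γ : ℕ → ℝ≥0 satisfies Γ(1) ≤ A and, for every k ≥ 1, Γ(3^k) ≤ A^{−4/3}·3^{k+1}·Γ(3^{k−1})² + C₂·A^{2/3}·3^{−k}. Then Γ(3^k) ≤ A/3^k for all k ≥ 0, and consequently for every n ≥ 1 (choosing k with 3^{k−1} ≤ n < 3^k, assuming Γ is nonincreasing) Γ(n) ≤ 3A/n. -/

import Mathlib

/-!
Write `u k = Γ (3 ^ k)`. The recursion has the shape `u (k + 1) ≤ a 3^(k+2) u k ^ 2 + c / 3^(k+1)`,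
and the ansatz `u k ≤ A / 3 ^ k` reproduces itself: the square term contributes
`a 3^(k+2) (A / 3^k)^2 = 27 a A^2 / 3^(k+1)`, so the induction closes as soon as `27 a A^2 + c ≤ A`.
With `a = A^(-4/3)` this is the constant condition `27 A^(2/3) + C₂ A^(2/3) ≤ A`.
Monotonicity then interpolates between consecutive powers of `3` at the cost of a factor `3`.
-/

theorem le_div_three_pow_of_le_sq_add {u : ℕ → ℝ} {a c A : ℝ} (hu : ∀ k, 0 ≤ u k) (ha : 0 ≤ a)
    (hconst : 27 * a * A ^ 2 + c ≤ A) (h0 : u 0 ≤ A)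
    (hrec : ∀ k, u (k + 1) ≤ a * 3 ^ (k + 2) * u k ^ 2 + c / 3 ^ (k + 1)) :
    ∀ k, u k ≤ A / 3 ^ k := by
  intro k
  induction k with
  | zero => simpa using h0
  | succ k ih =>
    have hsq : u k ^ 2 ≤ (A / 3 ^ k) ^ 2 := pow_le_pow_left₀ (hu k) ih 2
    have hsquare_term : a * 3 ^ (k + 2) * (A / 3 ^ k) ^ 2 = 27 * a * A ^ 2 / 3 ^ (k + 1) := by
      field_simp
      ring
    calc u (k + 1) ≤ a * 3 ^ (k + 2) * (A / 3 ^ k) ^ 2 + c / 3 ^ (k + 1) := by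
          grw [hrec k, hsq]
      _ = (27 * a * A ^ 2 + c) / 3 ^ (k + 1) := by rw [hsquare_term, add_div]
      _ ≤ A / 3 ^ (k + 1) := by gcongr

theorem Antitone.le_mul_div_of_le_div_pow {f : ℕ → ℝ} (hf : Antitone f) {b : ℕ} (hb : 1 < b)
    {A : ℝ} (hA : 0 ≤ A) (hpow : ∀ k, f (b ^ k) ≤ A / b ^ k) {n : ℕ} (hn : 1 ≤ n) :
    f n ≤ b * A / n := by
  set k := Nat.log b n
  have hlow : b ^ k ≤ n := Nat.pow_log_le_self b (by omega)
  have hhigh : (n : ℝ) ≤ b ^ (k + 1) := by exact_mod_cast (Nat.lt_pow_succ_log_self hb n).le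
  have hb0 : (0 : ℝ) < b := by positivity
  calc f n ≤ A / b ^ k := (hf hlow).trans (hpow k)
    _ = b * A / b ^ (k + 1) := by field_simp; ring
    _ ≤ b * A / n := by gcongr

theorem stmt_9_general (C₂ A : ℝ) (hA : 1 ≤ A)
    (hconst : 27 * A ^ ((2:ℝ)/3) + C₂ * A ^ ((2:ℝ)/3) ≤ A)
    (Γ : ℕ → ℝ) (hΓ0 : ∀ n, 0 ≤ Γ n) (hbase : Γ 1 ≤ A)
    (hrec : ∀ k : ℕ, 1 ≤ k →
      Γ (3 ^ k) ≤ A ^ (-(4:ℝ)/3) * 3 ^ (k + 1) * (Γ (3 ^ (k - 1))) ^ 2 +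
        C₂ * A ^ ((2:ℝ)/3) * (3 : ℝ) ^ (-(k:ℝ))) :
    (∀ k : ℕ, Γ (3 ^ k) ≤ A / 3 ^ k) ∧
    (Antitone Γ → ∀ n : ℕ, 1 ≤ n → Γ n ≤ 3 * A / n) := by
  have hA0 : 0 < A := one_pos.trans_le hA
  have hrpow : A ^ (-(4:ℝ)/3) * A ^ 2 = A ^ ((2:ℝ)/3) := by
    rw [← Real.rpow_natCast, ← Real.rpow_add hA0]
    norm_num
  have hconst' : 27 * A ^ (-(4:ℝ)/3) * A ^ 2 + C₂ * A ^ ((2:ℝ)/3) ≤ A := by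
    rwa [mul_assoc, hrpow]
  have hrec' : ∀ k : ℕ, Γ (3 ^ (k + 1)) ≤ A ^ (-(4:ℝ)/3) * 3 ^ (k + 2) * Γ (3 ^ k) ^ 2 +
      C₂ * A ^ ((2:ℝ)/3) / 3 ^ (k + 1) := by
    intro k
    have h := hrec (k + 1) (by omega)
    rwa [Nat.add_sub_cancel, Real.rpow_neg (by norm_num), Real.rpow_natCast, ← div_eq_mul_inv]
      at h
  have hpow : ∀ k : ℕ, Γ (3 ^ k) ≤ A / 3 ^ k :=
    le_div_three_pow_of_le_sq_add (u := fun k => Γ (3 ^ k)) (fun k => hΓ0 _) (by positivity)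
      hconst' (by simpa using hbase) hrec'
  refine ⟨hpow, fun hanti n hn => ?_⟩
  exact_mod_cast hanti.le_mul_div_of_le_div_pow (b := 3) (by norm_num) hA0.le
    (by exact_mod_cast hpow) hn

/-- The induction scheme in Kozma–Nachmias's one-arm upper bound (Lemma 3.4). -/
theorem stmt_9 (C₂ A : ℝ) (hC₂ : 0 < C₂) (hA : 1 ≤ A)
    (hconst : 27 * A ^ ((2:ℝ)/3) + C₂ * A ^ ((2:ℝ)/3) ≤ A)
    (Γ : ℕ → ℝ) (hΓ0 : ∀ n, 0 ≤ Γ n) (hbase : Γ 1 ≤ A)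
    (hrec : ∀ k : ℕ, 1 ≤ k →
      Γ (3 ^ k) ≤ A ^ (-(4:ℝ)/3) * 3 ^ (k + 1) * (Γ (3 ^ (k - 1))) ^ 2 +
        C₂ * A ^ ((2:ℝ)/3) * (3 : ℝ) ^ (-(k:ℝ))) :
    (∀ k : ℕ, Γ (3 ^ k) ≤ A / 3 ^ k) ∧
    (Antitone Γ → ∀ n : ℕ, 1 ≤ n → Γ n ≤ 3 * A / n) :=
  stmt_9_general C₂ A hA hconst Γ hΓ0 hbase hrec
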